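/- (Andréief/Heine identity.) Let φ₁,…,φ_p and ψ₁,…,ψ_p be integrable functions on a measure space (X, μ) such that all products φ_i·ψ_j are integrable. Then ∫_{X^p} det[φ_i(x_j)]_{i,j} · det[ψ_i(x_j)]_{i,j} dμ(x₁)⋯dμ(x_p) = p! · det[∫_X φ_i(x)ψ_j(x) dμ(x)]_{i,j}. -/

import Mathlib

open MeasureTheory Finset

/-- Andréief/Heine identity:
`∫_{X^p} det[φ_i(x_j)]·det[ψ_i(x_j)] dμ^p = p!·det[∫ φ_i ψ_j dμ]`. -/
theorem andreief_identity
    {X : Type*} [MeasurableSpace X] (μ : Measure X) [SigmaFinite μ]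
    (p : ℕ) (φ ψ : Fin p → X → ℝ)
    (hφ : ∀ i, Integrable (φ i) μ) (hψ : ∀ i, Integrable (ψ i) μ)
    (hφψ : ∀ i j, Integrable (fun x => φ i x * ψ j x) μ) :
    ∫ x : Fin p → X,
        (Matrix.of fun i j : Fin p => φ i (x j)).det *
        (Matrix.of fun i j : Fin p => ψ i (x j)).det
      ∂(Measure.pi fun _ => μ) =
    (Nat.factorial p : ℝ) *
      (Matrix.of fun i j : Fin p => ∫ x, φ i x * ψ j x ∂μ).det := by
  classical
  letI : MeasureSpace X := ⟨μ⟩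
  have hvol : (Measure.pi fun _ : Fin p => μ) = (volume : Measure (Fin p → X)) :=
    (volume_pi).symm
  set A : Matrix (Fin p) (Fin p) ℝ := Matrix.of fun i j => ∫ x, φ i x * ψ j x ∂μ with hA
  -- integrability of each term
  have hint : ∀ (σ τ : Equiv.Perm (Fin p)),
      Integrable (fun x : Fin p → X => ∏ j, (φ (σ j) (x j) * ψ (τ j) (x j)))
        (Measure.pi fun _ => μ) := by
    intro σ τ
    rw [hvol]
    exact Integrable.fintype_prod (f := fun j x => φ (σ j) x * ψ (τ j) x)
      (fun j => hφψ (σ j) (τ j))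
  have key : ∀ x : Fin p → X,
      (Matrix.of fun i j : Fin p => φ i (x j)).det *
      (Matrix.of fun i j : Fin p => ψ i (x j)).det
      = ∑ σ : Equiv.Perm (Fin p), ∑ τ : Equiv.Perm (Fin p),
          (((Equiv.Perm.sign σ : ℤ) : ℝ) * ((Equiv.Perm.sign τ : ℤ) : ℝ)) *
          ∏ j, (φ (σ j) (x j) * ψ (τ j) (x j)) := by
    intro x
    rw [Matrix.det_apply', Matrix.det_apply', Finset.sum_mul_sum]
    refine Finset.sum_congr rfl fun σ _ => Finset.sum_congr rfl fun τ _ => ?_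
    rw [Finset.prod_mul_distrib]
    simp [Matrix.of_apply]
    ring
  calc
    ∫ x : Fin p → X,
        (Matrix.of fun i j : Fin p => φ i (x j)).det *
        (Matrix.of fun i j : Fin p => ψ i (x j)).det
      ∂(Measure.pi fun _ => μ)
      = ∑ σ : Equiv.Perm (Fin p), ∑ τ : Equiv.Perm (Fin p),
          (((Equiv.Perm.sign σ : ℤ) : ℝ) * ((Equiv.Perm.sign τ : ℤ) : ℝ)) *
          ∏ j, ∫ x, φ (σ j) x * ψ (τ j) x ∂μ := by
        simp_rw [key]
        rw [integral_finset_sum _ (fun σ _ => integrable_finset_sum _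
          (fun τ _ => ((hint σ τ).const_mul _)))]
        refine Finset.sum_congr rfl fun σ _ => ?_
        rw [integral_finset_sum _ (fun τ _ => ((hint σ τ).const_mul _))]
        refine Finset.sum_congr rfl fun τ _ => ?_
        rw [integral_const_mul]
        congr 1
        rw [hvol]
        exact integral_fintype_prod_eq_prod (ι := Fin p) (f := fun j x => φ (σ j) x * ψ (τ j) x)
    _ = ∑ σ : Equiv.Perm (Fin p), A.det := by
        refine Finset.sum_congr rfl fun σ _ => ?_
        rw [← Matrix.det_transpose]
        rw [Matrix.det_apply']
        rw [← Equiv.sum_comp (Equiv.mulRight σ) _]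
        refine Finset.sum_congr rfl fun τ _ => ?_
        simp only [Equiv.coe_mulRight, Equiv.Perm.mul_apply]
        have hsign : ((Equiv.Perm.sign (τ * σ) : ℤ) : ℝ)
            = ((Equiv.Perm.sign σ : ℤ) : ℝ) * ((Equiv.Perm.sign τ : ℤ) : ℝ) := by
          simp [mul_comm]
        rw [hsign]
        congr 1
        · rcases Int.units_eq_one_or (Equiv.Perm.sign σ) with h | h <;>
            rw [h] <;> push_cast <;> ring
        · rw [← Equiv.prod_comp σ (fun k => A.transpose (τ k) k)]
          rfl
    _ = (Nat.factorial p : ℝ) * A.det := by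
        rw [Finset.sum_const, Finset.card_univ, Fintype.card_perm, Fintype.card_fin,
          nsmul_eq_mul]
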